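/- arXiv:2101.02853 — 6 statements merged into one kernel-verified Lean document; each statement's English description precedes it below -/
import Mathlib

section
/- Let A be a unital C*-algebra, and let (f_i)_{i ∈ I} be a family of positive elements of A with ∑_{i ∈ I} f_i² = 1 (unordered convergence). Then for every a ∈ A, the unordered sum ∑_{i ∈ I} f_i a f_i converges in A, and the map a ↦ ∑_{i ∈ I} f_i a f_i is linear, unital, and positive. -/
theorem exists_unital_positive_map_of_partition
    {A : Type*} [CStarAlgebra A] [PartialOrder A] [StarOrderedRing A]
    {I : Type*} (f : I → A) (hpos : ∀ i, 0 ≤ f i)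
    (hsum : HasSum (fun i => f i ^ 2) 1) :
    ∃ Φ : A →ₗ[ℂ] A,
      (∀ a : A, HasSum (fun i => f i * a * f i) (Φ a)) ∧
      Φ 1 = 1 ∧
      (∀ a : A, 0 ≤ a → 0 ≤ Φ a) := by
  have hsa : ∀ i, star (f i) = f i := fun i => (IsSelfAdjoint.of_nonneg (hpos i)).star_eq
  -- Step 1: summability for nonneg a
  have key : ∀ a : A, 0 ≤ a → Summable (fun i => f i * a * f i) := by
    intro a ha
    rw [summable_iff_vanishing]
    intro e he
    obtain ⟨ε, hε, hεe⟩ := Metric.mem_nhds_iff.mp he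
    have hpos' : (0:ℝ) < ε / (‖a‖ + 1) := by positivity
    obtain ⟨s, hs⟩ := (summable_iff_vanishing.mp hsum.summable)
      (Metric.ball 0 (ε / (‖a‖ + 1))) (Metric.ball_mem_nhds _ hpos')
    refine ⟨s, fun t ht => hεe ?_⟩
    have h0 : (0:A) ≤ ∑ i ∈ t, f i * a * f i :=
      Finset.sum_nonneg fun i _ => by
        simpa [hsa i] using star_left_conjugate_nonneg ha (f i)
    have hle : ∑ i ∈ t, f i * a * f i ≤ ‖a‖ • ∑ i ∈ t, f i ^ 2 := by
      rw [Finset.smul_sum]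
      refine Finset.sum_le_sum fun i _ => ?_
      calc f i * a * f i ≤ f i * (algebraMap ℝ A ‖a‖) * f i := by
            simpa [hsa i] using
              star_left_conjugate_le_conjugate (IsSelfAdjoint.le_algebraMap_norm_self ha.isSelfAdjoint) (f i)
        _ = ‖a‖ • f i ^ 2 := by
            simp [Algebra.algebraMap_eq_smul_one, sq, mul_assoc]
    have hnorm : ‖∑ i ∈ t, f i * a * f i‖ ≤ ‖a‖ * ‖∑ i ∈ t, f i ^ 2‖ := by
      calc ‖∑ i ∈ t, f i * a * f i‖ ≤ ‖‖a‖ • ∑ i ∈ t, f i ^ 2‖ :=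
            CStarAlgebra.norm_le_norm_of_nonneg_of_le h0 hle
        _ = ‖a‖ * ‖∑ i ∈ t, f i ^ 2‖ := by
            rw [norm_smul, Real.norm_eq_abs, abs_of_nonneg (norm_nonneg a)]
    have hsmall : ‖∑ i ∈ t, f i ^ 2‖ < ε / (‖a‖ + 1) := by
      simpa [Metric.mem_ball] using hs t ht
    refine Metric.mem_ball.mpr ?_
    rw [dist_zero_right]
    calc ‖∑ i ∈ t, f i * a * f i‖ ≤ ‖a‖ * ‖∑ i ∈ t, f i ^ 2‖ := hnorm
      _ ≤ (‖a‖ + 1) * ‖∑ i ∈ t, f i ^ 2‖ := by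
          apply mul_le_mul_of_nonneg_right (by linarith) (norm_nonneg _)
      _ < (‖a‖ + 1) * (ε / (‖a‖ + 1)) := by
          apply mul_lt_mul_of_pos_left hsmall (by positivity)
      _ = ε := by field_simp
  -- Step 2: summability for all a
  have keyall : ∀ a : A, Summable (fun i => f i * a * f i) := by
    intro a
    have hmem : a ∈ Submodule.span ℂ {x : A | 0 ≤ x} := by
      rw [CStarAlgebra.span_nonneg]; trivial
    induction hmem using Submodule.span_induction with
    | mem x hx => exact key x hx
    | zero => simpa using summable_zero
    | add x y _ _ hx hy => simpa [mul_add, add_mul] using hx.add hy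
    | smul c x _ hx => simpa [mul_smul_comm, smul_mul_assoc] using hx.const_smul c
  refine ⟨{ toFun := fun a => ∑' i, f i * a * f i
            map_add' := fun a b => by
              simp only [mul_add, add_mul]
              exact Summable.tsum_add (keyall a) (keyall b)
            map_smul' := fun c a => by
              simp only [mul_smul_comm, smul_mul_assoc, RingHom.id_apply]
              exact Summable.tsum_const_smul c (keyall a) }, ?_, ?_, ?_⟩
  · exact fun a => (keyall a).hasSum
  · have : HasSum (fun i => f i * 1 * f i) 1 := by
      simpa [sq] using hsum
    simpa using this.tsum_eq
  · intro a ha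
    exact hasSum_le (fun i => by simpa [hsa i] using star_left_conjugate_nonneg ha (f i))
      hasSum_zero (keyall a).hasSum
end

section
/- Let G be a countable group acting on a compact Hausdorff space X by homeomorphisms, with the action minimal. Let f : X → ℝ be continuous with f ≥ 0 and f ≠ 0. Suppose given a family (f_i)_{i ∈ I} of nonnegative continuous functions on X together with group elements (s_i)_{i ∈ I} such that ∑_{i ∈ I} f_i² = 1 (uniform unordered convergence) and for every s ∈ G and x ∈ X there exists i ∈ I with s_i = s and f_i(x) > 0 (full support). Then there exists δ > 0 such that for all x ∈ X, ∑_{i ∈ I} f_i(x)² · f(s_i⁻¹ · x) ≥ δ. -/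
/-! Each term `fᵢ(x)² f(sᵢ⁻¹ • x)` of the sum is a nonnegative continuous function of `x`, hence a
continuous minorant of the whole sum. Minimality makes the sum positive at every point: the orbit of
`x` meets the open set `{f > 0}`, say at `g • x`, and full support supplies an `i` with `sᵢ = g⁻¹`
and `fᵢ(x) > 0`. Positive continuous minorants around every point of a compact space give a uniform
positive lower bound. -/

open Filter Topology Set

theorem exists_pos_forall_le_of_continuous_minorants {X : Type*} [TopologicalSpace X]
    [CompactSpace X] {F : X → ℝ} (h : ∀ x, ∃ g : X → ℝ, Continuous g ∧ g ≤ F ∧ 0 < g x) :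
    ∃ δ > 0, ∀ x, δ ≤ F x := by
  have hsmall : ∀ᶠ δ in 𝓝 (0 : ℝ), ∀ x ∈ univ, δ ≤ F x :=
    isCompact_univ.eventually_forall_of_forall_eventually fun x _ => by
      obtain ⟨g, hg, hgF, hgx⟩ := h x
      exact (continuousAt_fst.eventually_lt (hg.comp continuous_snd).continuousAt hgx).mono
        fun z hz => hz.le.trans (hgF z.2)
  obtain ⟨δ, hδF, hδ⟩ :=
    ((hsmall.filter_mono nhdsWithin_le_nhds).and (self_mem_nhdsWithin (s := Ioi 0))).exists
  exact ⟨δ, hδ, fun x => hδF x (mem_univ x)⟩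

theorem ContinuousMap.exists_pos_of_nonneg_of_ne_zero {X : Type*} [TopologicalSpace X]
    {f : C(X, ℝ)} (hf : 0 ≤ f) (hfne : f ≠ 0) : ∃ x, 0 < f x := by
  by_contra! hle
  exact hfne (ContinuousMap.ext fun x => (hle x).antisymm (hf x))

theorem exists_smul_pos_of_dense_orbit {G X : Type*} [Monoid G] [TopologicalSpace X]
    [MulAction G X] (hmin : ∀ x : X, Dense (MulAction.orbit G x)) {f : C(X, ℝ)} (hf : 0 ≤ f)
    (hfne : f ≠ 0) (x : X) : ∃ g : G, 0 < f (g • x) :=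
  have : MulAction.IsMinimal G X := ⟨hmin⟩
  (isOpen_lt continuous_const f.continuous).exists_smul_mem G x
    (f.exists_pos_of_nonneg_of_ne_zero hf hfne)

theorem Summable.mul_of_nonneg_of_le_const {I : Type*} {a b : I → ℝ} {C : ℝ} (ha : Summable a)
    (ha0 : 0 ≤ a) (hb0 : 0 ≤ b) (hbC : ∀ i, b i ≤ C) : Summable fun i => a i * b i :=
  (ha.mul_right C).of_nonneg_of_le (fun i => mul_nonneg (ha0 i) (hb0 i))
    fun i => mul_le_mul_of_nonneg_left (hbC i) (ha0 i)

theorem full_support_generalized_measure_uniformly_positive_general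
    {G X : Type*} [Group G]
    [TopologicalSpace X] [CompactSpace X]
    [MulAction G X] (hcont : ∀ s : G, Continuous fun x : X => s • x)
    (hmin : ∀ x : X, Dense (MulAction.orbit G x))
    (f : C(X, ℝ)) (hf : 0 ≤ f) (hfne : f ≠ 0)
    {I : Type*} (fi : I → C(X, ℝ)) (s : I → G)
    (hsum : HasSum (fun i => fi i ^ 2) 1)
    (hfull : ∀ (g : G) (x : X), ∃ i, s i = g ∧ 0 < fi i x) :
    ∃ δ > (0 : ℝ), ∀ x : X, δ ≤ ∑' i, (fi i x) ^ 2 * f ((s i)⁻¹ • x) := by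
  have hterm_nonneg : ∀ x i, 0 ≤ fi i x ^ 2 * f ((s i)⁻¹ • x) :=
    fun x i => mul_nonneg (sq_nonneg _) (hf _)
  have hsummable : ∀ x, Summable fun i => fi i x ^ 2 * f ((s i)⁻¹ • x) := fun x =>
    have hsum_at : HasSum (fun i => fi i x ^ 2) 1 := by
      simpa using hsum.mapL (ContinuousMap.evalCLM ℝ x)
    hsum_at.summable.mul_of_nonneg_of_le_const (fun i => sq_nonneg _) (fun i => hf _)
      fun i => (le_abs_self _).trans (f.norm_coe_le_norm _)
  refine exists_pos_forall_le_of_continuous_minorants fun x => ?_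
  obtain ⟨g, hg⟩ := exists_smul_pos_of_dense_orbit hmin hf hfne x
  obtain ⟨i, hsi, hi⟩ := hfull g⁻¹ x
  refine ⟨fun y => fi i y ^ 2 * f ((s i)⁻¹ • y), ?_, fun y => ?_, ?_⟩
  · exact ((fi i).continuous.pow 2).mul (f.continuous.comp (hcont _))
  · exact (hsummable y).le_tsum i fun j _ => hterm_nonneg y j
  · rw [hsi, inv_inv]
    exact mul_pos (pow_pos hi 2) hg

theorem full_support_generalized_measure_uniformly_positive
    {G X : Type*} [Group G] [Countable G]
    [TopologicalSpace X] [CompactSpace X] [T2Space X]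
    [MulAction G X] (hcont : ∀ s : G, Continuous fun x : X => s • x)
    (hmin : ∀ x : X, Dense (MulAction.orbit G x))
    (f : C(X, ℝ)) (hf : 0 ≤ f) (hfne : f ≠ 0)
    {I : Type*} (fi : I → C(X, ℝ)) (s : I → G)
    (hfi : ∀ i, 0 ≤ fi i)
    (hsum : HasSum (fun i => fi i ^ 2) 1)
    (hfull : ∀ (g : G) (x : X), ∃ i, s i = g ∧ 0 < fi i x) :
    ∃ δ > (0 : ℝ), ∀ x : X, δ ≤ ∑' i, (fi i x) ^ 2 * f ((s i)⁻¹ • x) :=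
  full_support_generalized_measure_uniformly_positive_general hcont hmin f hf hfne fi s hsum hfull
end

section
/- Let X be a nonempty compact convex subset of a locally convex Hausdorff topological vector space, and let Φ : X → X be a continuous affine map. Then Φ has a fixed point. -/
open Filter Topology Finset

/-!
Markov–Kakutani for a single map. Along an orbit `xₖ = Φᵏ x₀` in `K`, the Cesàro means
`Sₙ = (x₀ + ⋯ + xₙ) / (n + 1)` stay in `K` by convexity, and affinity gives
`Φ Sₙ - Sₙ = (xₙ₊₁ - x₀) / (n + 1)`, which tends to `0` because `K` is bounded.
A cluster point of `(Sₙ)` in the compact set `K` is then a fixed point.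
-/

theorem IsCompact.exists_fixedPoint_of_tendsto_sub_nhds_zero {E ι : Type*} [AddCommGroup E]
    [TopologicalSpace E] [IsTopologicalAddGroup E] [T2Space E] {K : Set E} {Φ : E → E}
    (hK : IsCompact K) (hΦ : ContinuousOn Φ K) {l : Filter ι} [l.NeBot] {u : ι → E}
    (hu : ∀ᶠ i in l, u i ∈ K) (h : Tendsto (fun i ↦ Φ (u i) - u i) l (𝓝 0)) :
    ∃ x ∈ K, Φ x = x := by
  obtain ⟨x, hxK, hx⟩ := hK.exists_mapClusterPt (le_principal_iff.2 hu)
  have hdisp : Tendsto (fun y ↦ Φ y - y) (𝓝 x ⊓ map u l) (𝓝 (Φ x - x)) :=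
    ((hΦ x hxK).sub continuousWithinAt_id).mono_left
      (le_inf inf_le_left (inf_le_right.trans (le_principal_iff.2 hu)))
  have hcluster : ClusterPt (Φ x - x) (𝓝 0) := (hx.tendsto_comp' hdisp).clusterPt.mono h
  refine ⟨x, hxK, sub_eq_zero.1 (not_not.1 fun hne ↦ ?_)⟩
  exact hcluster.ne (disjoint_iff.1 (disjoint_nhds_nhds.2 hne))

section CesaroMean

variable {E : Type*} [AddCommGroup E] [Module ℝ E]

noncomputable def cesaroMean (x : ℕ → E) (n : ℕ) : E :=
  ((n : ℝ) + 1)⁻¹ • ∑ k ∈ range (n + 1), x k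

@[simp]
theorem cesaroMean_zero (x : ℕ → E) : cesaroMean x 0 = x 0 := by
  simp [cesaroMean]

theorem cesaroMean_succ (x : ℕ → E) (n : ℕ) :
    cesaroMean x (n + 1) =
      ((n : ℝ) + 2)⁻¹ • x (n + 1) + (1 - ((n : ℝ) + 2)⁻¹) • cesaroMean x n := by
  have hweight : (1 - ((n : ℝ) + 2)⁻¹) * ((n : ℝ) + 1)⁻¹ = ((n : ℝ) + 2)⁻¹ := by
    field_simp
    ring
  rw [cesaroMean, cesaroMean, smul_smul, hweight, sum_range_succ, smul_add, add_comm]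
  push_cast
  ring_nf

theorem cesaroMean_shift_sub (x : ℕ → E) (n : ℕ) :
    cesaroMean (fun k ↦ x (k + 1)) n - cesaroMean x n = ((n : ℝ) + 1)⁻¹ • (x (n + 1) - x 0) := by
  rw [cesaroMean, cesaroMean, ← smul_sub, ← sum_sub_distrib, sum_range_sub]

theorem inv_natCast_add_two_mem_Icc (n : ℕ) : ((n : ℝ) + 2)⁻¹ ∈ Set.Icc (0 : ℝ) 1 :=
  ⟨by positivity, inv_le_one_of_one_le₀ (by linarith [n.cast_nonneg (α := ℝ)])⟩

theorem Convex.cesaroMean_mem {K : Set E} (hK : Convex ℝ K) {x : ℕ → E} (hx : ∀ k, x k ∈ K)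
    (n : ℕ) : cesaroMean x n ∈ K := by
  induction n with
  | zero => simpa using hx 0
  | succ n ih =>
    obtain ⟨h0, h1⟩ := inv_natCast_add_two_mem_Icc n
    rw [cesaroMean_succ]
    exact hK (hx _) ih h0 (sub_nonneg.2 h1) (add_sub_cancel _ _)

theorem map_cesaroMean {K : Set E} (hK : Convex ℝ K) {Φ : E → E}
    (haff : ∀ x ∈ K, ∀ y ∈ K, ∀ t : ℝ, 0 ≤ t → t ≤ 1 →
      Φ (t • x + (1 - t) • y) = t • Φ x + (1 - t) • Φ y)
    {x : ℕ → E} (hx : ∀ k, x k ∈ K) (n : ℕ) :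
    Φ (cesaroMean x n) = cesaroMean (fun k ↦ Φ (x k)) n := by
  induction n with
  | zero => simp
  | succ n ih =>
    obtain ⟨h0, h1⟩ := inv_natCast_add_two_mem_Icc n
    rw [cesaroMean_succ, haff _ (hx _) _ (hK.cesaroMean_mem hx n) _ h0 h1, ih, cesaroMean_succ]

theorem tendsto_cesaroMean_shift_sub_nhds_zero [TopologicalSpace E] [IsTopologicalAddGroup E]
    {S : Set E} (hS : Bornology.IsVonNBounded ℝ S) {x : ℕ → E} (hx : ∀ k, x k ∈ S) :
    Tendsto (fun n ↦ cesaroMean (fun k ↦ x (k + 1)) n - cesaroMean x n) atTop (𝓝 0) := by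
  simp_rw [cesaroMean_shift_sub]
  refine (hS.sub hS).smul_tendsto_zero (.of_forall fun n ↦ Set.sub_mem_sub (hx _) (hx _)) ?_
  simpa using tendsto_one_div_add_atTop_nhds_zero_nat (𝕜 := ℝ)

end CesaroMean

theorem continuous_affine_selfmap_has_fixed_point_general
    {E : Type*} [AddCommGroup E] [Module ℝ E] [TopologicalSpace E]
    [IsTopologicalAddGroup E] [ContinuousSMul ℝ E]
    [T2Space E]
    (K : Set E) (hKne : K.Nonempty) (hKcomp : IsCompact K) (hKconv : Convex ℝ K)
    (Φ : E → E) (hmaps : Set.MapsTo Φ K K) (hcont : ContinuousOn Φ K)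
    (haff : ∀ x ∈ K, ∀ y ∈ K, ∀ t : ℝ, 0 ≤ t → t ≤ 1 →
      Φ (t • x + (1 - t) • y) = t • Φ x + (1 - t) • Φ y) :
    ∃ x ∈ K, Φ x = x := by
  obtain ⟨x₀, hx₀⟩ := hKne
  have horbit : ∀ k, Φ^[k] x₀ ∈ K := fun k ↦ hmaps.iterate k hx₀
  refine hKcomp.exists_fixedPoint_of_tendsto_sub_nhds_zero (l := atTop) hcont
    (.of_forall (hKconv.cesaroMean_mem horbit)) ?_
  have hshift : ∀ n, Φ (cesaroMean (Φ^[·] x₀) n) = cesaroMean (fun k ↦ Φ^[k + 1] x₀) n := by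
    intro n
    simp only [map_cesaroMean hKconv haff horbit, Function.iterate_succ_apply']
  simpa only [hshift] using
    tendsto_cesaroMean_shift_sub_nhds_zero (hKcomp.isVonNBounded ℝ) horbit

theorem continuous_affine_selfmap_has_fixed_point
    {E : Type*} [AddCommGroup E] [Module ℝ E] [TopologicalSpace E]
    [IsTopologicalAddGroup E] [ContinuousSMul ℝ E] [LocallyConvexSpace ℝ E]
    [T2Space E]
    (K : Set E) (hKne : K.Nonempty) (hKcomp : IsCompact K) (hKconv : Convex ℝ K)
    (Φ : E → E) (hmaps : Set.MapsTo Φ K K) (hcont : ContinuousOn Φ K)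
    (haff : ∀ x ∈ K, ∀ y ∈ K, ∀ t : ℝ, 0 ≤ t → t ≤ 1 →
      Φ (t • x + (1 - t) • y) = t • Φ x + (1 - t) • Φ y) :
    ∃ x ∈ K, Φ x = x :=
  continuous_affine_selfmap_has_fixed_point_general K hKne hKcomp hKconv Φ hmaps hcont haff
end

section
/- Let G be a countable group and X a compact Hausdorff G-space. Suppose (μ_k)_{k ≥ 1} is a sequence of unital positive linear maps on a unital C*-algebra A, and a_1, a_2, … is a sequence in the unit ball of A such that for all l ≥ 2, all 1 ≤ s, k_1, …, k_r < l, and all 0 ≤ r < n_l, one has ‖μ_l ∘ μ_{k_r} ∘ ⋯ ∘ μ_{k_1}(a_s)‖ < 2^{−l}, where (n_k) is an increasing sequence of positive integers with (∑_{i=1}^k 2^{−i})^{n_k} < 2^{−k}. Then the map μ = ∑_{l=1}^∞ 2^{−l} μ_l (which is a unital positive linear map on A) satisfies μⁿ(a_s) → 0 as n → ∞, for each s. -/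
/-!
Split `μ = P + Q` with `P = ∑_{i ≤ M} 2⁻ⁱ μᵢ` and `Q` the tail, of total weight `δ = 2⁻ᴹ`, for
some `M ≥ s`. As `P` is positive with `P 1 = (1 - δ) • 1`, `‖Pʲ a_s‖ ≤ 4 (1 - δ)ʲ`. Expanding `Pʲ`
into words in `μ₁, …, μ_M`, the hypothesis on the `a_s` gives `‖μₗ Pʲ a_s‖ ≤ 2⁻ˡ (1 - δ)ʲ` for
`l > M` and `j < n_l`, while `(1 - δ)^{n_l} < δ` controls `j ≥ n_l`; hence
`∑ⱼ ‖Q Pʲ a_s‖ ≤ 17 δ`. The telescoping identity `μᵐ = Pᵐ + ∑ⱼ μ^{m-1-j} Q Pʲ` and `‖μᵏ x‖ ≤ 4 ‖x‖`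
give `‖μᵐ a_s‖ ≤ 4 (1 - δ)ᵐ + 68 δ`, and `δ` is arbitrarily small.
-/

open Finset Filter Topology

lemma sum_range_le_of_le_geometric {b : ℕ → ℝ} {q ε C : ℝ} {N : ℕ} (hq₀ : 0 ≤ q) (hq₁ : q < 1)
    (hε : 0 ≤ ε) (hC : 0 ≤ C) (hsmall : ∀ j < N, b j ≤ ε * q ^ j)
    (hlarge : ∀ j, b j ≤ C * q ^ j) (m : ℕ) :
    ∑ j ∈ range m, b j ≤ (ε + C * q ^ N) / (1 - q) := by
  have hgeom : ∀ n, ∑ j ∈ range n, q ^ j ≤ 1 / (1 - q) := fun n => by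
    have h := geom_sum_Ico_le_of_lt_one (m := 0) (n := n) hq₀ hq₁
    rwa [← range_eq_Ico, pow_zero] at h
  have hsmall_sum : ∀ n ≤ N, ∑ j ∈ range n, b j ≤ ε / (1 - q) := fun n hn => calc
    _ ≤ ∑ j ∈ range n, ε * q ^ j := sum_le_sum fun j hj => hsmall j ((mem_range.1 hj).trans_le hn)
    _ ≤ ε * (1 / (1 - q)) := by rw [← mul_sum]; exact mul_le_mul_of_nonneg_left (hgeom n) hε
    _ = ε / (1 - q) := by ring
  have hq : 0 < 1 - q := by linarith
  rcases le_total m N with hmN | hNm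
  · calc _ ≤ ε / (1 - q) := hsmall_sum m hmN
      _ ≤ _ := by gcongr; linarith [mul_nonneg hC (pow_nonneg hq₀ N)]
  · rw [← sum_range_add_sum_Ico _ hNm, add_div]
    gcongr
    · exact hsmall_sum N le_rfl
    · calc _ ≤ ∑ j ∈ Ico N m, C * q ^ j := sum_le_sum fun j _ => hlarge j
        _ ≤ C * (q ^ N / (1 - q)) := by
          rw [← mul_sum]; exact mul_le_mul_of_nonneg_left (geom_sum_Ico_le_of_lt_one hq₀ hq₁) hC
        _ = C * q ^ N / (1 - q) := by ring

lemma sum_norm_le_of_hasSum {E κ : Type*} [NormedAddCommGroup E] {s : Finset κ}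
    {f : κ → ℕ → E} {S : κ → E} {g : ℕ → ℝ} {G : ℝ} (hf : ∀ j, HasSum (f j) (S j))
    (hg : HasSum g G) (hfg : ∀ k, ∑ j ∈ s, ‖f j k‖ ≤ g k) : ∑ j ∈ s, ‖S j‖ ≤ G := by
  have hsummable : ∀ j ∈ s, Summable fun k => ‖f j k‖ := fun j hj =>
    Summable.of_nonneg_of_le (fun _ => norm_nonneg _)
      (fun k => (single_le_sum (fun j _ => norm_nonneg (f j k)) hj).trans (hfg k)) hg.summable
  calc ∑ j ∈ s, ‖S j‖ ≤ ∑ j ∈ s, ∑' k, ‖f j k‖ :=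
        sum_le_sum fun j hj => (hf j).tsum_eq ▸ norm_tsum_le_tsum_norm (hsummable j hj)
    _ = ∑' k, ∑ j ∈ s, ‖f j k‖ := (Summable.tsum_finsetSum hsummable).symm
    _ ≤ G := hg.tsum_eq ▸ Summable.tsum_le_tsum hfg (summable_sum hsummable) hg.summable

lemma hasSum_half_pow_add_succ (M : ℕ) :
    HasSum (fun k : ℕ => ((1 : ℝ) / 2) ^ (k + M + 1)) (((1 : ℝ) / 2) ^ M) := by
  have h := hasSum_geometric_two.mul_left (((1 : ℝ) / 2) ^ (M + 1))
  rw [pow_succ, mul_assoc, one_div_mul_eq_div, div_self two_ne_zero, mul_one] at h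
  rwa [show (fun k : ℕ => ((1 : ℝ) / 2) ^ (k + M + 1)) =
    fun k => (1 / 2) ^ M * (1 / 2) * (1 / 2) ^ k from funext fun k => by ring]

lemma sum_Icc_half_pow (M : ℕ) :
    ∑ i ∈ Icc 1 M, ((1 : ℝ) / 2) ^ i = 1 - ((1 : ℝ) / 2) ^ M := by
  induction M with
  | zero => simp
  | succ M ih => rw [sum_Icc_succ_top (by omega), ih]; ring

lemma one_sub_half_pow_nonneg (M : ℕ) : 0 ≤ 1 - ((1 : ℝ) / 2) ^ M :=
  sub_nonneg.2 (pow_le_one₀ (by norm_num) (by norm_num))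

lemma one_sub_half_pow_lt_one (M : ℕ) : 1 - ((1 : ℝ) / 2) ^ M < 1 :=
  sub_lt_self 1 (by positivity)

lemma tendsto_zero_of_le_geometric_add {u : ℕ → ℝ} (hu : ∀ m, 0 ≤ u m)
    (h : ∀ ε > 0, ∃ C q : ℝ, 0 ≤ q ∧ q < 1 ∧ ∀ m, u m ≤ C * q ^ m + ε) :
    Tendsto u atTop (𝓝 0) := by
  refine tendsto_order.2 ⟨fun a ha => Eventually.of_forall fun m => ha.trans_le (hu m),
    fun ε hε => ?_⟩
  obtain ⟨C, q, hq₀, hq₁, hCq⟩ := h (ε / 2) (by positivity)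
  have hgeom : Tendsto (fun m => C * q ^ m) atTop (𝓝 0) := by
    simpa using (tendsto_pow_atTop_nhds_zero_of_lt_one hq₀ hq₁).const_mul C
  filter_upwards [hgeom.eventually (gt_mem_nhds (half_pos hε))] with m hm
  linarith [hCq m]

section PositiveMaps

variable {A B : Type*} [CStarAlgebra A] [CStarAlgebra B]

lemma LinearMap.map_algebraMap_of_map_one {φ : A →ₗ[ℂ] B} {c : ℝ} (h1 : φ 1 = algebraMap ℝ B c)
    (t : ℝ) : φ (algebraMap ℝ A t) = algebraMap ℝ B (t * c) := by
  rw [Algebra.algebraMap_eq_smul_one, LinearMap.map_smul_of_tower, h1, map_mul,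
    Algebra.algebraMap_eq_smul_one t, smul_mul_assoc, one_mul]

variable [PartialOrder A] [StarOrderedRing A] [PartialOrder B] [StarOrderedRing B]

lemma norm_apply_le_of_nonneg_of_map_one {φ : A →ₗ[ℂ] B} (hφ : ∀ x, 0 ≤ x → 0 ≤ φ x)
    {c : ℝ} (hc : 0 ≤ c) (h1 : φ 1 = algebraMap ℝ B c) {x : A} (hx : 0 ≤ x) :
    ‖φ x‖ ≤ c * ‖x‖ := by
  rw [mul_comm, CStarAlgebra.norm_le_iff_le_algebraMap _ (by positivity) (hφ x hx),
    ← φ.map_algebraMap_of_map_one h1, ← sub_nonneg, ← map_sub]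
  exact hφ _ (sub_nonneg.2 (IsSelfAdjoint.of_nonneg hx).le_algebraMap_norm_self)

lemma norm_apply_le_of_map_one {φ : A →ₗ[ℂ] B} (hφ : ∀ x, 0 ≤ x → 0 ≤ φ x)
    {c : ℝ} (hc : 0 ≤ c) (h1 : φ 1 = algebraMap ℝ B c) (x : A) :
    ‖φ x‖ ≤ 4 * c * ‖x‖ := by
  obtain ⟨y, hy_nonneg, hy_norm, hy⟩ := CStarAlgebra.exists_sum_four_nonneg x
  calc ‖φ x‖ = ‖∑ i : Fin 4, Complex.I ^ (i : ℕ) • φ (y i)‖ := by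
        rw [hy, map_sum]; simp only [map_smul]
    _ ≤ ∑ i : Fin 4, c * ‖x‖ := by
        refine (norm_sum_le _ _).trans (sum_le_sum fun i _ => ?_)
        rw [norm_smul, norm_pow, Complex.norm_I, one_pow, one_mul]
        exact (norm_apply_le_of_nonneg_of_map_one hφ hc h1 (hy_nonneg i)).trans
          (by gcongr; exact hy_norm i)
    _ = 4 * c * ‖x‖ := by
        simp only [sum_const, card_univ, Fintype.card_fin, nsmul_eq_mul, Nat.cast_ofNat]; ring

lemma norm_iterate_apply_le_of_map_one {φ : A →ₗ[ℂ] A} (hφ : ∀ x, 0 ≤ x → 0 ≤ φ x)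
    {c : ℝ} (hc : 0 ≤ c) (h1 : φ 1 = algebraMap ℝ A c) (r : ℕ) (x : A) :
    ‖φ^[r] x‖ ≤ 4 * c ^ r * ‖x‖ := by
  have hpow : ∀ r : ℕ, (∀ x, 0 ≤ x → 0 ≤ (φ ^ r) x) ∧ (φ ^ r) 1 = algebraMap ℝ A (c ^ r) := by
    intro r
    induction r with
    | zero => simp
    | succ r ih =>
      rw [pow_succ']
      refine ⟨fun x hx => hφ _ (ih.1 x hx), ?_⟩
      rw [Module.End.mul_apply, ih.2, φ.map_algebraMap_of_map_one h1, pow_succ]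
  rw [← Module.End.pow_apply]
  exact norm_apply_le_of_map_one (hpow r).1 (pow_nonneg hc r) (hpow r).2 x

end PositiveMaps

section Words

variable {R E ι : Type*} [Semiring R] [AddCommMonoid E] [Module R E] (μ : ι → E →ₗ[R] E)

/-- `wordMap μ [k₁, …, kᵣ] = μ kᵣ ∘ ⋯ ∘ μ k₁`: the first letter is applied first. -/
def wordMap (ks : List ι) : E →ₗ[R] E :=
  ks.foldr (fun k f => f ∘ₗ μ k) LinearMap.id

lemma wordMap_cons_apply (k : ι) (ks : List ι) (x : E) :
    wordMap μ (k :: ks) x = wordMap μ ks (μ k x) := rfl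

lemma wordMap_apply_eq_foldl_ofFn (ks : List ι) (x : E) :
    wordMap μ ks x =
      (List.ofFn fun j : Fin ks.length => ⇑(μ ks[(j : ℕ)])).foldl (fun y φ => φ y) x := by
  rw [List.ofFn_getElem_eq_map ks fun k => ⇑(μ k)]
  induction ks generalizing x with
  | nil => rfl
  | cons k ks ih => rw [wordMap_cons_apply, ih]; rfl

end Words

lemma norm_apply_wordMap_iterate_sum_smul_le {E ι : Type*} [SeminormedAddCommGroup E]
    [NormedSpace ℂ E] (μ : ι → E →ₗ[ℂ] E) (T : E →ₗ[ℂ] E) {s : Finset ι} {w : ι → ℝ}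
    (hw : ∀ i ∈ s, 0 ≤ w i) {x : E} {N : ℕ} {ε : ℝ}
    (h : ∀ ks : List ι, (∀ k ∈ ks, k ∈ s) → ks.length < N → ‖T (wordMap μ ks x)‖ ≤ ε) (j : ℕ) :
    ∀ ks : List ι, (∀ k ∈ ks, k ∈ s) → ks.length + j < N →
      ‖T (wordMap μ ks ((⇑(∑ i ∈ s, w i • μ i))^[j] x))‖ ≤ (∑ i ∈ s, w i) ^ j * ε := by
  induction j with
  | zero => simpa using h
  | succ j ih =>
    intro ks hks hlen
    rw [Function.iterate_succ_apply', LinearMap.sum_apply, map_sum, map_sum]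
    calc _ ≤ ∑ i ∈ s, w i * ((∑ i ∈ s, w i) ^ j * ε) := by
          refine (norm_sum_le _ _).trans (sum_le_sum fun i hi => ?_)
          rw [LinearMap.smul_apply, LinearMap.map_smul_of_tower, LinearMap.map_smul_of_tower,
            norm_smul, Real.norm_of_nonneg (hw i hi), ← wordMap_cons_apply]
          gcongr
          · exact hw i hi
          · refine ih (i :: ks) ?_ (by simp only [List.length_cons]; omega)
            simpa [hi] using hks
      _ = (∑ i ∈ s, w i) ^ (j + 1) * ε := by rw [← sum_mul, pow_succ]; ring

lemma iterate_eq_iterate_add_sum {E F : Type*} [AddCommGroup E] [FunLike F E E]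
    [AddMonoidHomClass F E E] (T : F) (P : E → E) (x : E) (m : ℕ) :
    T^[m] x = P^[m] x + ∑ j ∈ range m, T^[m - 1 - j] (T (P^[j] x) - P (P^[j] x)) := by
  induction m with
  | zero => simp
  | succ m ih =>
    have hshift : ∀ j ∈ range m, T (T^[m - 1 - j] (T (P^[j] x) - P (P^[j] x))) =
        T^[m + 1 - 1 - j] (T (P^[j] x) - P (P^[j] x)) := fun j hj => by
      rw [← Function.iterate_succ_apply' T]
      congr 2
      have := mem_range.1 hj
      omega
    rw [Function.iterate_succ_apply', ih, map_add, map_sum, sum_congr rfl hshift,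
      sum_range_succ, Nat.add_sub_cancel, Nat.sub_self, Function.iterate_zero_apply,
      Function.iterate_succ_apply' P]
    abel

section DyadicMean

variable {A : Type*} [CStarAlgebra A]

noncomputable def dyadicPartialSum (μ : ℕ → A →ₗ[ℂ] A) (M : ℕ) : A →ₗ[ℂ] A :=
  ∑ i ∈ Icc 1 M, ((1 : ℝ) / 2) ^ i • μ i

variable {μ : ℕ → A →ₗ[ℂ] A} {T : A →ₗ[ℂ] A}

lemma dyadicPartialSum_apply_one (hunital : ∀ l, μ l 1 = 1) (M : ℕ) :
    dyadicPartialSum μ M 1 = algebraMap ℝ A (1 - ((1 : ℝ) / 2) ^ M) := by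
  simp only [dyadicPartialSum, LinearMap.sum_apply, LinearMap.smul_apply, hunital,
    ← sum_Icc_half_pow, map_sum, Algebra.algebraMap_eq_smul_one]

lemma hasSum_sub_dyadicPartialSum
    (hT : ∀ x, HasSum (fun l : ℕ => ((1 : ℝ) / 2) ^ (l + 1) • μ (l + 1) x) (T x)) (M : ℕ) (x : A) :
    HasSum (fun k : ℕ => ((1 : ℝ) / 2) ^ (k + M + 1) • μ (k + M + 1) x)
      (T x - dyadicPartialSum μ M x) := by
  have h := (hasSum_nat_add_iff' M).2 (hT x)
  have hsum : ∑ i ∈ range M, ((1 : ℝ) / 2) ^ (i + 1) • μ (i + 1) x = dyadicPartialSum μ M x := by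
    rw [dyadicPartialSum, LinearMap.sum_apply, range_eq_Ico, sum_Ico_add' (fun i =>
      ((1 : ℝ) / 2) ^ i • μ i x), zero_add, Ico_add_one_right_eq_Icc]
    simp only [LinearMap.smul_apply]
  simpa only [hsum, add_right_comm _ M 1] using h

lemma map_one_of_hasSum (hunital : ∀ l, μ l 1 = 1)
    (hT : ∀ x, HasSum (fun l : ℕ => ((1 : ℝ) / 2) ^ (l + 1) • μ (l + 1) x) (T x)) :
    T 1 = 1 := by
  have h := (hasSum_half_pow_add_succ 0).smul_const (1 : A)
  simp only [add_zero, pow_zero, one_smul] at h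
  exact (hT 1).unique (by simpa only [hunital] using h)

variable [PartialOrder A] [StarOrderedRing A]

lemma dyadicPartialSum_nonneg (hpos : ∀ l, ∀ x : A, 0 ≤ x → 0 ≤ μ l x) (M : ℕ) {x : A}
    (hx : 0 ≤ x) : 0 ≤ dyadicPartialSum μ M x := by
  simp only [dyadicPartialSum, LinearMap.sum_apply, LinearMap.smul_apply]
  exact sum_nonneg fun i _ => smul_nonneg (by positivity) (hpos i x hx)

lemma norm_iterate_dyadicPartialSum_le (hunital : ∀ l, μ l 1 = 1)
    (hpos : ∀ l, ∀ x : A, 0 ≤ x → 0 ≤ μ l x) (M j : ℕ) {x : A} (hx : ‖x‖ ≤ 1) :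
    ‖(dyadicPartialSum μ M)^[j] x‖ ≤ 4 * (1 - ((1 : ℝ) / 2) ^ M) ^ j :=
  (norm_iterate_apply_le_of_map_one (fun _ => dyadicPartialSum_nonneg hpos M)
    (one_sub_half_pow_nonneg M) (dyadicPartialSum_apply_one hunital M) j x).trans
    (mul_le_of_le_one_right (by have := one_sub_half_pow_nonneg M; positivity) hx)

lemma map_nonneg_of_hasSum (hpos : ∀ l, ∀ x : A, 0 ≤ x → 0 ≤ μ l x)
    (hT : ∀ x, HasSum (fun l : ℕ => ((1 : ℝ) / 2) ^ (l + 1) • μ (l + 1) x) (T x)) {x : A}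
    (hx : 0 ≤ x) : 0 ≤ T x :=
  hasSum_le (fun _ => smul_nonneg (by positivity) (hpos _ x hx)) hasSum_zero (hT x)

lemma sum_norm_apply_iterate_dyadicPartialSum_le (hunital : ∀ l, μ l 1 = 1)
    (hpos : ∀ l, ∀ x : A, 0 ≤ x → 0 ≤ μ l x) {M l N : ℕ} (hl : M < l) {x : A} (hx : ‖x‖ ≤ 1)
    (hN : (1 - ((1 : ℝ) / 2) ^ M) ^ N ≤ ((1 : ℝ) / 2) ^ M)
    (hword : ∀ ks : List ℕ, (∀ k ∈ ks, k ∈ Icc 1 M) → ks.length < N →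
      ‖μ l (wordMap μ ks x)‖ ≤ ((1 : ℝ) / 2) ^ l) (m : ℕ) :
    ∑ j ∈ range m, ‖μ l ((dyadicPartialSum μ M)^[j] x)‖ ≤ 17 := by
  set δ : ℝ := (1 / 2) ^ M
  have hδ : 0 < δ := by positivity
  have hsmall : ∀ j < N, ‖μ l ((dyadicPartialSum μ M)^[j] x)‖ ≤ (1 / 2) ^ l * (1 - δ) ^ j :=
    fun j hj => by
      have h := norm_apply_wordMap_iterate_sum_smul_le μ (μ l) (s := Icc 1 M)
        (w := fun i => (1 / 2 : ℝ) ^ i) (fun _ _ => by positivity) hword j [] (by simp)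
        (by simpa using hj)
      rw [sum_Icc_half_pow, mul_comm] at h
      exact h
  have hlarge : ∀ j, ‖μ l ((dyadicPartialSum μ M)^[j] x)‖ ≤ 16 * (1 - δ) ^ j := fun j => calc
    _ ≤ 4 * 1 * ‖(dyadicPartialSum μ M)^[j] x‖ :=
      norm_apply_le_of_map_one (hpos l) zero_le_one (by rw [hunital, map_one]) _
    _ ≤ 4 * 1 * (4 * (1 - δ) ^ j) := by
      gcongr
      exact norm_iterate_dyadicPartialSum_le hunital hpos M j hx
    _ = 16 * (1 - δ) ^ j := by ring
  have hlδ : ((1 : ℝ) / 2) ^ l ≤ δ := pow_le_pow_of_le_one (by norm_num) (by norm_num) hl.le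
  calc _ ≤ ((1 / 2) ^ l + 16 * (1 - δ) ^ N) / (1 - (1 - δ)) :=
        sum_range_le_of_le_geometric (one_sub_half_pow_nonneg M) (one_sub_half_pow_lt_one M)
          (by positivity) (by norm_num) hsmall hlarge m
    _ ≤ (δ + 16 * δ) / δ := by rw [sub_sub_cancel]; gcongr
    _ = 17 := by field_simp; ring

lemma norm_iterate_le_of_hasSum (hunital : ∀ l, μ l 1 = 1)
    (hpos : ∀ l, ∀ x : A, 0 ≤ x → 0 ≤ μ l x)
    (hT : ∀ x, HasSum (fun l : ℕ => ((1 : ℝ) / 2) ^ (l + 1) • μ (l + 1) x) (T x))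
    {M : ℕ} {N : ℕ → ℕ} {x : A} (hx : ‖x‖ ≤ 1)
    (hN : ∀ l, M < l → (1 - ((1 : ℝ) / 2) ^ M) ^ N l ≤ ((1 : ℝ) / 2) ^ M)
    (hword : ∀ l, M < l → ∀ ks : List ℕ, (∀ k ∈ ks, k ∈ Icc 1 M) → ks.length < N l →
      ‖μ l (wordMap μ ks x)‖ ≤ ((1 : ℝ) / 2) ^ l) (m : ℕ) :
    ‖T^[m] x‖ ≤ 4 * (1 - ((1 : ℝ) / 2) ^ M) ^ m + 68 * ((1 : ℝ) / 2) ^ M := by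
  set P := dyadicPartialSum μ M
  have htail : ∑ j ∈ range m, ‖T (P^[j] x) - P (P^[j] x)‖ ≤ 17 * ((1 : ℝ) / 2) ^ M := by
    refine sum_norm_le_of_hasSum (fun j => hasSum_sub_dyadicPartialSum hT M _)
      ((hasSum_half_pow_add_succ M).mul_left 17) fun k => ?_
    simp only [norm_smul, Real.norm_of_nonneg (pow_nonneg (by norm_num : (0 : ℝ) ≤ 1 / 2) _),
      ← mul_sum, mul_comm (17 : ℝ)]
    gcongr
    exact sum_norm_apply_iterate_dyadicPartialSum_le hunital hpos (by omega) hx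
      (hN _ (by omega)) (hword _ (by omega)) m
  have hT1 : T 1 = algebraMap ℝ A 1 := by rw [map_one_of_hasSum hunital hT, map_one]
  calc ‖T^[m] x‖
      = ‖P^[m] x + ∑ j ∈ range m, T^[m - 1 - j] (T (P^[j] x) - P (P^[j] x))‖ := by
        rw [iterate_eq_iterate_add_sum]
    _ ≤ ‖P^[m] x‖ + ∑ j ∈ range m, 4 * 1 ^ (m - 1 - j) * ‖T (P^[j] x) - P (P^[j] x)‖ :=
        (norm_add_le _ _).trans <| add_le_add le_rfl <| (norm_sum_le _ _).trans <|
          sum_le_sum fun j _ => norm_iterate_apply_le_of_map_one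
            (fun _ => map_nonneg_of_hasSum hpos hT) zero_le_one hT1 _ _
    _ ≤ 4 * (1 - (1 / 2) ^ M) ^ m + 4 * (17 * (1 / 2) ^ M) := by
        simp only [one_pow, mul_one, ← mul_sum]
        gcongr
        exact norm_iterate_dyadicPartialSum_le hunital hpos M m hx
    _ = 4 * (1 - (1 / 2) ^ M) ^ m + 68 * (1 / 2) ^ M := by ring

end DyadicMean

theorem iterates_of_convex_combination_tend_to_zero_general
    {A : Type*} [CStarAlgebra A] [PartialOrder A] [StarOrderedRing A]
    (μ : ℕ → (A →ₗ[ℂ] A))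
    (hunital : ∀ l, μ l 1 = 1)
    (hpos : ∀ l, ∀ x : A, 0 ≤ x → 0 ≤ μ l x)
    (n : ℕ → ℕ) (hmono : StrictMono n)
    (hnk : ∀ k : ℕ, 1 ≤ k →
      (∑ i ∈ Finset.Icc 1 k, ((1 : ℝ) / 2) ^ i) ^ (n k) < ((1 : ℝ) / 2) ^ k)
    (a : ℕ → A) (ha : ∀ s, ‖a s‖ ≤ 1)
    (hav : ∀ l : ℕ, 2 ≤ l → ∀ r : ℕ, r < n l → ∀ s : ℕ, 1 ≤ s → s < l →
      ∀ k : Fin r → ℕ, (∀ j, 1 ≤ k j ∧ k j < l) →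
      ‖μ l ((List.ofFn fun j => ((μ (k j) : A →ₗ[ℂ] A) : A → A)).foldl
          (fun x φ => φ x) (a s))‖ < ((1 : ℝ) / 2) ^ l)
    (μtot : A →ₗ[ℂ] A)
    (hμtot : ∀ x : A,
      HasSum (fun l : ℕ => ((1 : ℝ) / 2) ^ (l + 1) • μ (l + 1) x) (μtot x)) :
    ∀ s : ℕ, 1 ≤ s →
      Filter.Tendsto (fun m : ℕ => ‖(fun x => μtot x)^[m] (a s)‖)
        Filter.atTop (nhds 0) := by
  intro s hs
  refine tendsto_zero_of_le_geometric_add (fun _ => norm_nonneg _) fun ε hε => ?_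
  obtain ⟨M₀, hM₀⟩ := exists_pow_lt_of_lt_one (show 0 < ε / 68 by positivity)
    (show (1 : ℝ) / 2 < 1 by norm_num)
  set M := max M₀ s
  have hM : ((1 : ℝ) / 2) ^ M ≤ (1 / 2) ^ M₀ :=
    pow_le_pow_of_le_one (by norm_num) (by norm_num) (le_max_left _ _)
  have hN : ∀ l, M < l → (1 - ((1 : ℝ) / 2) ^ M) ^ n l ≤ ((1 : ℝ) / 2) ^ M := fun l hl => calc
    _ ≤ (1 - ((1 : ℝ) / 2) ^ M) ^ n M := pow_le_pow_of_le_one (one_sub_half_pow_nonneg M)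
          (one_sub_half_pow_lt_one M).le (hmono.monotone hl.le)
    _ ≤ _ := by simpa only [sum_Icc_half_pow] using (hnk M (by omega)).le
  have hword : ∀ l, M < l → ∀ ks : List ℕ, (∀ k ∈ ks, k ∈ Icc 1 M) → ks.length < n l →
      ‖μ l (wordMap μ ks (a s))‖ ≤ ((1 : ℝ) / 2) ^ l := fun l hl ks hks hlen => by
    rw [wordMap_apply_eq_foldl_ofFn]
    refine (hav l (by omega) ks.length hlen s hs (by omega) _ fun j => ?_).le
    have hj := mem_Icc.1 (hks _ (List.getElem_mem j.isLt))
    exact ⟨hj.1, hj.2.trans_lt hl⟩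
  refine ⟨4, 1 - (1 / 2) ^ M, one_sub_half_pow_nonneg M, one_sub_half_pow_lt_one M, fun m =>
    (norm_iterate_le_of_hasSum hunital hpos hμtot (ha s) hN hword m).trans ?_⟩
  linarith

theorem iterates_of_convex_combination_tend_to_zero
    {A : Type*} [CStarAlgebra A] [PartialOrder A] [StarOrderedRing A]
    (μ : ℕ → (A →ₗ[ℂ] A))
    (hunital : ∀ l, μ l 1 = 1)
    (hpos : ∀ l, ∀ x : A, 0 ≤ x → 0 ≤ μ l x)
    (n : ℕ → ℕ) (hmono : StrictMono n) (hn1 : ∀ k, 1 ≤ n k)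
    (hnk : ∀ k : ℕ, 1 ≤ k →
      (∑ i ∈ Finset.Icc 1 k, ((1 : ℝ) / 2) ^ i) ^ (n k) < ((1 : ℝ) / 2) ^ k)
    (a : ℕ → A) (ha : ∀ s, ‖a s‖ ≤ 1)
    (hav : ∀ l : ℕ, 2 ≤ l → ∀ r : ℕ, r < n l → ∀ s : ℕ, 1 ≤ s → s < l →
      ∀ k : Fin r → ℕ, (∀ j, 1 ≤ k j ∧ k j < l) →
      ‖μ l ((List.ofFn fun j => ((μ (k j) : A →ₗ[ℂ] A) : A → A)).foldl
          (fun x φ => φ x) (a s))‖ < ((1 : ℝ) / 2) ^ l)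
    (μtot : A →ₗ[ℂ] A)
    (hμtot : ∀ x : A,
      HasSum (fun l : ℕ => ((1 : ℝ) / 2) ^ (l + 1) • μ (l + 1) x) (μtot x)) :
    ∀ s : ℕ, 1 ≤ s →
      Filter.Tendsto (fun m : ℕ => ‖(fun x => μtot x)^[m] (a s)‖)
        Filter.atTop (nhds 0) :=
  iterates_of_convex_combination_tend_to_zero_general μ hunital hpos n hmono hnk a ha hav μtot hμtot
end

section
/- Let G be a countable group, and for each i in a countable index set I let g_i : G → ℝ be a nonnegative bounded function and s_i ∈ G, such that ∑_{i ∈ I} g_i(r)² ≤ 1 for all r ∈ G. Define for ξ ∈ ℓ²(G) the function (Tξ)(r) = ∑_{i ∈ I} g_i(r) c_i(r) g_i'(r) ξ(s_i t⁻¹ s_i⁻¹ r), where t ∈ G is fixed, c_i : G → ℂ satisfies |c_i(r)| ≤ C for all i, r, and g_i'(r) = g_i(s_i t⁻¹ s_i⁻¹ r). Then ‖Tξ‖₂ ≤ C · ‖T'|ξ|‖₂, where (T'η)(r) = ∑_{i ∈ I} g_i(r) g_i'(r) η(s_i t⁻¹ s_i⁻¹ r) and |ξ|(r) = |ξ(r)|.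 -/
/-!
Termwise `‖(Tξ)(r)‖ ≤ C * (T'|ξ|)(r)`, so the point is that the series defining `T'|ξ|` converge
and that `T'|ξ| ∈ ℓ²` (otherwise the `tsum`s take the junk value `0`). With `σ i r = sᵢt⁻¹sᵢ⁻¹r`,
Cauchy–Schwarz and `∑ᵢ gᵢ(r)² ≤ 1` give `(T'x)(r)² ≤ ∑ᵢ (gᵢ(σ i r) x(σ i r))²`; summing over `r`
and reindexing along each bijection `σ i` bounds this by `∑ᵤ (∑ᵢ gᵢ(u)²) x(u)² ≤ ∑ᵤ x(u)²`.
-/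

section WeightedSums

variable {ι α : Type*}

theorem summable_mul_and_sq_tsum_mul_le_of_tsum_sq_le_one {a b : ι → ℝ}
    (ha : ∀ i, 0 ≤ a i) (hb : ∀ i, 0 ≤ b i) (ha₂ : Summable fun i => a i ^ 2)
    (ha₁ : ∑' i, a i ^ 2 ≤ 1) (hb₂ : Summable fun i => b i ^ 2) :
    (Summable fun i => a i * b i) ∧ (∑' i, a i * b i) ^ 2 ≤ ∑' i, b i ^ 2 := by
  obtain ⟨hab, hle⟩ := Real.summable_and_inner_le_Lp_mul_Lq_tsum_of_nonneg .two_two ha hb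
    (by simpa only [Real.rpow_two] using ha₂) (by simpa only [Real.rpow_two] using hb₂)
  simp only [Real.rpow_two, ← Real.sqrt_eq_rpow] at hle
  refine ⟨hab, ?_⟩
  have hA : 0 ≤ ∑' i, a i ^ 2 := tsum_nonneg fun i => sq_nonneg _
  have hB : 0 ≤ ∑' i, b i ^ 2 := tsum_nonneg fun i => sq_nonneg _
  calc (∑' i, a i * b i) ^ 2
      ≤ (√(∑' i, a i ^ 2) * √(∑' i, b i ^ 2)) ^ 2 :=
        pow_le_pow_left₀ (tsum_nonneg fun i => mul_nonneg (ha i) (hb i)) hle 2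
    _ = (∑' i, a i ^ 2) * ∑' i, b i ^ 2 := by
        rw [mul_pow, Real.sq_sqrt hA, Real.sq_sqrt hB]
    _ ≤ ∑' i, b i ^ 2 := mul_le_of_le_one_left hB ha₁

theorem summable_tsum_comp_perm {f : ι → α → ℝ} (hf : ∀ i u, 0 ≤ f i u) (σ : ι → Equiv.Perm α)
    (hrow : ∀ u, Summable fun i => f i u) (hsum : Summable fun u => ∑' i, f i u) :
    (∀ r, Summable fun i => f i (σ i r)) ∧ Summable fun r => ∑' i, f i (σ i r) := by
  have hprod : Summable fun p : α × ι => f p.2 p.1 :=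
    (summable_prod_of_nonneg fun p => hf p.2 p.1).2 ⟨hrow, hsum⟩
  have hshear : Summable fun p : α × ι => f p.2 (σ p.2 p.1) := by
    let e : α × ι ≃ α × ι :=
      (Equiv.prodComm α ι).trans ((Equiv.prodShear (Equiv.refl ι) σ).trans (Equiv.prodComm ι α))
    exact (e.summable_iff.2 hprod : _)
  exact (summable_prod_of_nonneg fun p => hf p.2 _).1 hshear

theorem summable_sq_tsum_mul_comp_perm {g : ι → α → ℝ} {x : α → ℝ} (σ : ι → Equiv.Perm α)
    (hg : ∀ i u, 0 ≤ g i u) (hx : ∀ u, 0 ≤ x u) (hg₂ : ∀ u, Summable fun i => g i u ^ 2)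
    (hg₁ : ∀ u, ∑' i, g i u ^ 2 ≤ 1) (hx₂ : Summable fun u => x u ^ 2) :
    (∀ r, Summable fun i => g i r * g i (σ i r) * x (σ i r)) ∧
      Summable fun r => (∑' i, g i r * g i (σ i r) * x (σ i r)) ^ 2 := by
  have hrow : ∀ u, Summable fun i => (g i u * x u) ^ 2 := fun u => by
    simpa only [mul_pow] using (hg₂ u).mul_right (x u ^ 2)
  have hsum : Summable fun u => ∑' i, (g i u * x u) ^ 2 := by
    refine hx₂.of_nonneg_of_le (fun u => tsum_nonneg fun i => sq_nonneg _) fun u => ?_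
    simp only [mul_pow, tsum_mul_right]
    exact mul_le_of_le_one_left (sq_nonneg _) (hg₁ u)
  obtain ⟨hrow', hsum'⟩ := summable_tsum_comp_perm (fun i u => sq_nonneg _) σ hrow hsum
  have hCS := fun r => summable_mul_and_sq_tsum_mul_le_of_tsum_sq_le_one (hg · r)
    (fun i => mul_nonneg (hg i _) (hx _)) (hg₂ r) (hg₁ r) (hrow' r)
  simp only [← mul_assoc] at hCS
  exact ⟨fun r => (hCS r).1,
    hsum'.of_nonneg_of_le (fun r => sq_nonneg _) fun r => (hCS r).2⟩

theorem sqrt_tsum_sq_le_mul_sqrt_tsum_sq {f b : α → ℝ} {C : ℝ} (hC : 0 ≤ C)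
    (hf : ∀ r, 0 ≤ f r) (hfb : ∀ r, f r ≤ C * b r) (hb : Summable fun r => b r ^ 2) :
    √(∑' r, f r ^ 2) ≤ C * √(∑' r, b r ^ 2) := by
  have hsq : ∀ r, f r ^ 2 ≤ C ^ 2 * b r ^ 2 := fun r => by
    rw [← mul_pow]; exact pow_le_pow_left₀ (hf r) (hfb r) 2
  have hf₂ : Summable fun r => f r ^ 2 :=
    (hb.mul_left (C ^ 2)).of_nonneg_of_le (fun r => sq_nonneg _) hsq
  calc √(∑' r, f r ^ 2) ≤ √(C ^ 2 * ∑' r, b r ^ 2) := by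
        rw [← tsum_mul_left]; exact Real.sqrt_le_sqrt (hf₂.tsum_le_tsum hsq (hb.mul_left _))
    _ = C * √(∑' r, b r ^ 2) := by rw [Real.sqrt_mul (sq_nonneg C), Real.sqrt_sq hC]

end WeightedSums

theorem norm_ofReal_mul_mul_ofReal_mul_le {a b C : ℝ} {z w : ℂ} (ha : 0 ≤ a) (hb : 0 ≤ b)
    (hz : ‖z‖ ≤ C) : ‖(a : ℂ) * z * (b : ℂ) * w‖ ≤ C * (a * b * ‖w‖) := by
  rw [norm_mul, norm_mul, norm_mul, Complex.norm_of_nonneg ha, Complex.norm_of_nonneg hb]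
  calc a * ‖z‖ * b * ‖w‖ = ‖z‖ * (a * b * ‖w‖) := by ring
    _ ≤ C * (a * b * ‖w‖) := by gcongr

theorem l2_domination_estimate_general
    {G : Type*} [Group G]
    {I : Type*}
    (g : I → G → ℝ) (s : I → G) (t : G)
    (hg : ∀ i r, 0 ≤ g i r)
    (hsummable : ∀ r : G, Summable fun i => (g i r) ^ 2)
    (hsum : ∀ r : G, ∑' i, (g i r) ^ 2 ≤ 1)
    (c : I → G → ℂ) (C : ℝ) (hC : 0 ≤ C) (hc : ∀ i r, ‖c i r‖ ≤ C)
    (ξ : G → ℂ) (hξ : Summable fun r => ‖ξ r‖ ^ 2) :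
    Real.sqrt (∑' r : G,
        ‖∑' i, (g i r : ℂ) * c i r * (g i (s i * t⁻¹ * (s i)⁻¹ * r) : ℂ) *
            ξ (s i * t⁻¹ * (s i)⁻¹ * r)‖ ^ 2)
      ≤ C * Real.sqrt (∑' r : G,
        (∑' i, g i r * g i (s i * t⁻¹ * (s i)⁻¹ * r) *
            ‖ξ (s i * t⁻¹ * (s i)⁻¹ * r)‖) ^ 2) := by
  obtain ⟨hrow, hcol⟩ := summable_sq_tsum_mul_comp_perm
    (fun i => Equiv.mulLeft (s i * t⁻¹ * (s i)⁻¹)) hg (fun r => norm_nonneg (ξ r)) hsummable hsum hξ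
  refine sqrt_tsum_sq_le_mul_sqrt_tsum_sq hC (fun r => norm_nonneg _) (fun r => ?_) hcol
  exact tsum_of_norm_bounded ((hrow r).hasSum.mul_left C)
    fun i => norm_ofReal_mul_mul_ofReal_mul_le (hg _ _) (hg _ _) (hc i r)

theorem l2_domination_estimate
    {G : Type*} [Group G] [Countable G]
    {I : Type*} [Countable I]
    (g : I → G → ℝ) (s : I → G) (t : G)
    (hg : ∀ i r, 0 ≤ g i r)
    (hgb : ∀ i, ∃ M : ℝ, ∀ r, g i r ≤ M)
    (hsummable : ∀ r : G, Summable fun i => (g i r) ^ 2)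
    (hsum : ∀ r : G, ∑' i, (g i r) ^ 2 ≤ 1)
    (c : I → G → ℂ) (C : ℝ) (hC : 0 ≤ C) (hc : ∀ i r, ‖c i r‖ ≤ C)
    (ξ : G → ℂ) (hξ : Summable fun r => ‖ξ r‖ ^ 2) :
    Real.sqrt (∑' r : G,
        ‖∑' i, (g i r : ℂ) * c i r * (g i (s i * t⁻¹ * (s i)⁻¹ * r) : ℂ) *
            ξ (s i * t⁻¹ * (s i)⁻¹ * r)‖ ^ 2)
      ≤ C * Real.sqrt (∑' r : G,
        (∑' i, g i r * g i (s i * t⁻¹ * (s i)⁻¹ * r) *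
            ‖ξ (s i * t⁻¹ * (s i)⁻¹ * r)‖) ^ 2) :=
  l2_domination_estimate_general g s t hg hsummable hsum c C hC hc ξ hξ
end

section
/- Let G be a countable group acting minimally by homeomorphisms on a compact Hausdorff space X, and fix x ∈ X and an open neighborhood V of x. Then there exist n ∈ ℕ, group elements s_1, …, s_n ∈ G, and nonnegative continuous functions f_1, …, f_n on X with ∑_{i=1}^n f_i² = 1, such that for every regular Borel probability measure ν on X, the probability measure ν' defined by ν'(h) = ∫_X ∑_{i=1}^n f_i(y)² h(s_i⁻¹ y) dν(y) for continuous h : X → ℝ, is supported in the closure of V (i.e., ν'(closure V) = 1). -/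
open scoped ENNReal
open MeasureTheory Set

theorem push_measures_to_neighborhood
    {G X : Type*} [Group G] [Countable G]
    [TopologicalSpace X] [CompactSpace X] [T2Space X]
    [MeasurableSpace X] [BorelSpace X]
    [MulAction G X] (hcont : ∀ s : G, Continuous fun x : X => s • x)
    (hmin : ∀ x : X, Dense (MulAction.orbit G x))
    (x : X) (V : Set X) (hV : IsOpen V) (hxV : x ∈ V) :
    ∃ (n : ℕ) (s : Fin n → G) (f : Fin n → C(X, ℝ)),
      (∀ i, 0 ≤ f i) ∧ (∑ i, f i ^ 2) = 1 ∧
      ∀ ν : MeasureTheory.Measure X, MeasureTheory.IsProbabilityMeasure ν →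
        (∑ i, MeasureTheory.Measure.map (fun y : X => (s i)⁻¹ • y)
            (ν.withDensity fun y => ENNReal.ofReal ((f i y) ^ 2)))
          (closure V) = 1 := by
  -- the open cover indexed by G
  set U : G → Set X := fun g => (fun y : X => g⁻¹ • y) ⁻¹' V with hU
  have hUopen : ∀ g, IsOpen (U g) := fun g => hV.preimage (hcont g⁻¹)
  have hcover : (Set.univ : Set X) ⊆ ⋃ g, U g := by
    intro y _
    obtain ⟨z, ⟨g, rfl⟩, hz⟩ := (hmin y).exists_mem_open hV ⟨x, hxV⟩
    exact mem_iUnion.2 ⟨g⁻¹, by simpa [U] using hz⟩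
  obtain ⟨t, ht⟩ := isCompact_univ.elim_finite_subcover U hUopen hcover
  set n := t.card with hn
  set e : Fin n ≃ ↥t := (Fintype.equivFinOfCardEq (by simp [hn])).symm with he
  refine ⟨n, fun i => (e i : G), ?_⟩
  have hcov' : (Set.univ : Set X) ⊆ ⋃ i : Fin n, U (e i : G) := by
    intro y hy
    obtain ⟨g, hg, hyg⟩ := Set.mem_iUnion₂.1 (ht hy)
    exact mem_iUnion.2 ⟨e.symm ⟨g, hg⟩, by simpa using hyg⟩
  obtain ⟨ρ, hρ⟩ := PartitionOfUnity.exists_isSubordinate isClosed_univ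
    (fun i : Fin n => U (e i : G)) (fun i => hUopen _) hcov'
  refine ⟨fun i => ⟨fun y => Real.sqrt (ρ i y),
      Real.continuous_sqrt.comp (ρ i).continuous⟩, ?_, ?_, ?_⟩
  · intro i y
    exact Real.sqrt_nonneg _
  · ext y
    have h1 : ∑ᶠ i, ρ i y = 1 := ρ.sum_eq_one (mem_univ y)
    rw [finsum_eq_sum_of_fintype] at h1
    simp only [ContinuousMap.coe_sum, ContinuousMap.coe_one, Finset.sum_apply,
      ContinuousMap.pow_apply, ContinuousMap.coe_mk, Pi.one_apply]
    calc ∑ i, Real.sqrt (ρ i y) ^ 2 = ∑ i, ρ i y := by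
          refine Finset.sum_congr rfl fun i _ => Real.sq_sqrt (ρ.nonneg i y)
      _ = 1 := h1
  · intro ν hν
    have hsq : ∀ i y, (Real.sqrt (ρ i y)) ^ 2 = ρ i y :=
      fun i y => Real.sq_sqrt (ρ.nonneg i y)
    have hmeas : ∀ i : Fin n, Measurable fun y => ENNReal.ofReal
        ((Real.sqrt (ρ i y)) ^ 2) := by
      intro i
      exact (ENNReal.continuous_ofReal.comp
        ((Real.continuous_sqrt.comp (ρ i).continuous).pow 2)).measurable
    have hclosed : MeasurableSet (closure V) := isClosed_closure.measurableSet
    rw [Measure.finset_sum_apply]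
    have key : ∀ i : Fin n,
        (MeasureTheory.Measure.map (fun y : X => ((e i : G))⁻¹ • y)
          (ν.withDensity fun y => ENNReal.ofReal ((Real.sqrt (ρ i y)) ^ 2)))
          (closure V)
        = ∫⁻ y, ENNReal.ofReal (ρ i y) ∂ν := by
      intro i
      rw [Measure.map_apply (hcont _).measurable hclosed,
        withDensity_apply _ ((hclosed.preimage (hcont _).measurable))]
      have hsub : Function.support (fun y => ENNReal.ofReal ((Real.sqrt (ρ i y)) ^ 2))
          ⊆ (fun y : X => ((e i : G))⁻¹ • y) ⁻¹' closure V := by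
        intro y hy
        have : ρ i y ≠ 0 := by
          intro h0
          simp [hsq, h0] at hy
        have hyU : y ∈ U (e i : G) := hρ i (subset_tsupport _ this)
        exact subset_closure hyU
      rw [setLIntegral_eq_of_support_subset hsub]
      simp_rw [hsq]
    calc (∑ i, (MeasureTheory.Measure.map (fun y : X => ((e i : G))⁻¹ • y)
          (ν.withDensity fun y => ENNReal.ofReal ((Real.sqrt (ρ i y)) ^ 2)))
          (closure V))
        = ∑ i, ∫⁻ y, ENNReal.ofReal (ρ i y) ∂ν := by
          exact Finset.sum_congr rfl fun i _ => key i
      _ = ∫⁻ y, ∑ i, ENNReal.ofReal (ρ i y) ∂ν := by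
          rw [lintegral_finset_sum]
          intro i _
          exact (ENNReal.continuous_ofReal.comp (ρ i).continuous).measurable
      _ = ∫⁻ _, 1 ∂ν := by
          congr 1
          funext y
          rw [← ENNReal.ofReal_sum_of_nonneg (fun i _ => ρ.nonneg i y)]
          have h1 : ∑ᶠ i, ρ i y = 1 := ρ.sum_eq_one (mem_univ y)
          rw [finsum_eq_sum_of_fintype] at h1
          simp [h1]
      _ = 1 := by simp
end
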